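/- arXiv:1707.04787 — 3 statements merged into one kernel-verified Lean document; each statement's English description precedes it below -/
import Mathlib

section
/- Let F, G : ℝ² → ℝ be differentiable on a convex domain D, and suppose there exist positive constants μ₁, μ₂, μ₃ such that uniformly on D: ∂F/∂x₁ ≥ -μ₁, |∂F/∂x₂| + |∂G/∂x₁| ≤ μ₂, and ∂G/∂x₂ ≥ μ₃. Then for all x = (x₁,x₂), y = (y₁,y₂) in D, (F(x)-F(y))(x₁-y₁) + (G(x)-G(y))(x₂-y₂) ≥ -(μ₁ + μ₂²/(2μ₃))(x₁-y₁)² + (μ₃/2)(x₂-y₂)². -/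
/-!
Fix `v = x - y` and apply the mean value theorem on the segment `[y, x] ⊆ D` to the scalar
function `p ↦ F p * v₁ + G p * v₂`: the left-hand side equals `⟨J(z) v, v⟩` for the Jacobian `J`
at some `z ∈ D`. The diagonal entries are bounded below by `-μ₁` and `μ₃`, and the off-diagonal
contribution `(∂F/∂x₂ + ∂G/∂x₁) v₁ v₂` is absorbed by Young's inequality with weight `μ₃`, which
spends half of the `μ₃ v₂²` term.
-/

lemma mul_abs_mul_abs_le_young {μ ν : ℝ} (hν : 0 < ν) (s t : ℝ) :
    μ * (|s| * |t|) ≤ μ ^ 2 / (2 * ν) * s ^ 2 + ν / 2 * t ^ 2 := by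
  have hsq : 2 * ν * (μ * (|s| * |t|)) ≤ μ ^ 2 * s ^ 2 + ν ^ 2 * t ^ 2 := by
    nlinarith [sq_nonneg (μ * |s| - ν * |t|), sq_abs s, sq_abs t]
  have hsplit : μ ^ 2 / (2 * ν) * s ^ 2 + ν / 2 * t ^ 2 =
      (μ ^ 2 * s ^ 2 + ν ^ 2 * t ^ 2) / (2 * ν) := by
    field_simp
  rw [hsplit, le_div_iff₀ (by positivity)]
  linarith

lemma quadratic_form_lower_bound {μ₁ μ₂ μ₃ a b c d : ℝ} (hμ₃ : 0 < μ₃) (ha : -μ₁ ≤ a)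
    (hbc : |b| + |c| ≤ μ₂) (hd : μ₃ ≤ d) (s t : ℝ) :
    -(μ₁ + μ₂ ^ 2 / (2 * μ₃)) * s ^ 2 + μ₃ / 2 * t ^ 2 ≤
      a * s ^ 2 + (b + c) * (s * t) + d * t ^ 2 := by
  have hcross : -(μ₂ * (|s| * |t|)) ≤ (b + c) * (s * t) := by
    have hb : -(|b| * (|s| * |t|)) ≤ b * (s * t) := by
      rw [← abs_mul, ← abs_mul]; exact neg_abs_le _
    have hc : -(|c| * (|s| * |t|)) ≤ c * (s * t) := by
      rw [← abs_mul, ← abs_mul]; exact neg_abs_le _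
    nlinarith [mul_le_mul_of_nonneg_right hbc (by positivity : 0 ≤ |s| * |t|)]
  have hyoung := mul_abs_mul_abs_le_young (μ := μ₂) hμ₃ s t
  nlinarith [mul_le_mul_of_nonneg_right ha (sq_nonneg s),
    mul_le_mul_of_nonneg_right hd (sq_nonneg t)]

lemma ContinuousLinearMap.apply_prod_real {M : Type*} [AddCommGroup M] [Module ℝ M]
    [TopologicalSpace M] (L : ℝ × ℝ →L[ℝ] M) (v : ℝ × ℝ) :
    L v = v.1 • L (1, 0) + v.2 • L (0, 1) := by
  have hv : v = v.1 • ((1 : ℝ), (0 : ℝ)) + v.2 • ((0 : ℝ), (1 : ℝ)) := by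
    ext <;> simp
  conv_lhs => rw [hv]
  rw [map_add, map_smul, map_smul]

theorem stmt_0_general (D : Set (ℝ × ℝ)) (hD : Convex ℝ D)
    (F G : ℝ × ℝ → ℝ) (F' G' : ℝ × ℝ → (ℝ × ℝ →L[ℝ] ℝ))
    (hF : ∀ p ∈ D, HasFDerivAt F (F' p) p)
    (hG : ∀ p ∈ D, HasFDerivAt G (G' p) p)
    (μ₁ μ₂ μ₃ : ℝ) (hμ₃ : 0 < μ₃)
    (hdF1 : ∀ p ∈ D, F' p (1, 0) ≥ -μ₁)
    (hcross : ∀ p ∈ D, |F' p (0, 1)| + |G' p (1, 0)| ≤ μ₂)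
    (hdG2 : ∀ p ∈ D, G' p (0, 1) ≥ μ₃) :
    ∀ x ∈ D, ∀ y ∈ D,
      (F x - F y) * (x.1 - y.1) + (G x - G y) * (x.2 - y.2) ≥
        -(μ₁ + μ₂ ^ 2 / (2 * μ₃)) * (x.1 - y.1) ^ 2 + (μ₃ / 2) * (x.2 - y.2) ^ 2 := by
  intro x hx y hy
  set v := x - y
  have hderiv : ∀ p ∈ D, HasFDerivWithinAt (fun q => F q * v.1 + G q * v.2)
      (v.1 • F' p + v.2 • G' p) D p := fun p hp =>
    (((hF p hp).mul_const v.1).add ((hG p hp).mul_const v.2)).hasFDerivWithinAt.congr_fderiv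
      (ContinuousLinearMap.ext fun w => by simp)
  obtain ⟨z, hz, hmvt⟩ := domain_mvt hderiv hD hy hx
  have hzD : z ∈ D := hD.segment_subset hy hx hz
  have hbound := quadratic_form_lower_bound hμ₃ (hdF1 z hzD) (hcross z hzD) (hdG2 z hzD) v.1 v.2
  rw [add_apply, smul_apply, smul_apply, ContinuousLinearMap.apply_prod_real (F' z),
    ContinuousLinearMap.apply_prod_real (G' z)] at hmvt
  simp only [v, Prod.fst_sub, Prod.snd_sub, smul_eq_mul] at hmvt hbound ⊢
  linear_combination hbound - hmvt

/-- Lemma `lem:eigs`: derivative bounds imply the one-sided monotonicity (M3). -/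
theorem stmt_0 (D : Set (ℝ × ℝ)) (hD : Convex ℝ D)
    (F G : ℝ × ℝ → ℝ) (F' G' : ℝ × ℝ → (ℝ × ℝ →L[ℝ] ℝ))
    (hF : ∀ p ∈ D, HasFDerivAt F (F' p) p)
    (hG : ∀ p ∈ D, HasFDerivAt G (G' p) p)
    (μ₁ μ₂ μ₃ : ℝ) (hμ₁ : 0 < μ₁) (hμ₂ : 0 < μ₂) (hμ₃ : 0 < μ₃)
    (hdF1 : ∀ p ∈ D, F' p (1, 0) ≥ -μ₁)
    (hcross : ∀ p ∈ D, |F' p (0, 1)| + |G' p (1, 0)| ≤ μ₂)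
    (hdG2 : ∀ p ∈ D, G' p (0, 1) ≥ μ₃) :
    ∀ x ∈ D, ∀ y ∈ D,
      (F x - F y) * (x.1 - y.1) + (G x - G y) * (x.2 - y.2) ≥
        -(μ₁ + μ₂ ^ 2 / (2 * μ₃)) * (x.1 - y.1) ^ 2 + (μ₃ / 2) * (x.2 - y.2) ^ 2 :=
  stmt_0_general D hD F G F' G' hF hG μ₁ μ₂ μ₃ hμ₃ hdF1 hcross hdG2
end

section
/- Let f₁(u) = u(u-a)(u-1) with 0 < a < 1 and let F(u,w) = f₁(u) + w, G(u,w) = -ε(κu - w) with ε, κ > 0. Let μ > 0 be such that f₁'(x) ≥ -μ for all x ∈ ℝ. Then F, G satisfy condition (M3) with α = μ + (1+εκ)²/(2ε) and β = ε/2; that is, for all x = (x₁,x₂), y = (y₁,y₂) ∈ ℝ², (F(x)-F(y))(x₁-y₁) + (G(x)-G(y))(x₂-y₂) ≥ -α(x₁-y₁)² + β(x₂-y₂)². -/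
/-!
By the mean value theorem, `f₁' ≥ -μ` gives `(f₁ x₁ - f₁ y₁)(x₁ - y₁) ≥ -μ (x₁ - y₁)²`. The remaining
terms form the quadratic form `(1 - εκ) u v + ε v²` in the differences `u = x₁ - y₁`, `v = x₂ - y₂`;
its cross term is absorbed by Young's inequality with weight `ε`, using `|1 - εκ| ≤ 1 + εκ`.
-/

theorem mul_sq_le_sub_mul_sub_of_le_deriv {f : ℝ → ℝ} (hf : Differentiable ℝ f) {C : ℝ}
    (hf' : ∀ x, C ≤ deriv f x) (x y : ℝ) : C * (x - y) ^ 2 ≤ (f x - f y) * (x - y) := by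
  rcases le_total y x with hyx | hxy
  · have h := mul_sub_le_image_sub_of_le_deriv hf hf' hyx
    nlinarith [sub_nonneg.mpr hyx]
  · have h := mul_sub_le_image_sub_of_le_deriv hf hf' hxy
    nlinarith [sub_nonneg.mpr hxy]

theorem neg_sq_div_sub_le_mul_mul_of_abs_le {b m ε : ℝ} (hb : |b| ≤ m) (hε : 0 < ε) (u v : ℝ) :
    -(m ^ 2 / (2 * ε)) * u ^ 2 - ε / 2 * v ^ 2 ≤ b * u * v := by
  have hbuv : |b * u * v| ≤ m * |u| * |v| := by
    rw [abs_mul, abs_mul]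
    gcongr
  have hyoung : m * |u| * |v| ≤ m ^ 2 / (2 * ε) * u ^ 2 + ε / 2 * v ^ 2 := by
    rw [div_mul_eq_mul_div, div_add' _ _ _ (by positivity), le_div_iff₀ (by positivity),
      ← sq_abs u, ← sq_abs v]
    nlinarith [sq_nonneg (m * |u| - ε * |v|)]
  linarith [neg_abs_le (b * u * v)]

theorem stmt_16_general (a ε κ μ : ℝ) (hε : 0 < ε)
    (hκ : 0 < κ)
    (f₁ : ℝ → ℝ) (hf₁ : f₁ = fun u => u * (u - a) * (u - 1))
    (hμbound : ∀ x, deriv f₁ x ≥ -μ)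
    (F G : ℝ → ℝ → ℝ)
    (hF : F = fun u w => f₁ u + w)
    (hG : G = fun u w => -ε * (κ * u - w)) :
    ∀ x y : ℝ × ℝ,
      (F x.1 x.2 - F y.1 y.2) * (x.1 - y.1) + (G x.1 x.2 - G y.1 y.2) * (x.2 - y.2) ≥
        -(μ + (1 + ε * κ) ^ 2 / (2 * ε)) * (x.1 - y.1) ^ 2 +
          (ε / 2) * (x.2 - y.2) ^ 2 := by
  intro x y
  have hf₁_diff : Differentiable ℝ f₁ := by
    subst hf₁
    fun_prop
  have hcubic := mul_sq_le_sub_mul_sub_of_le_deriv hf₁_diff hμbound x.1 y.1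
  have hcoupling : |1 - ε * κ| ≤ 1 + ε * κ := by
    rw [abs_le]
    constructor <;> nlinarith [mul_pos hε hκ]
  have hcross := neg_sq_div_sub_le_mul_mul_of_abs_le hcoupling hε (x.1 - y.1) (x.2 - y.2)
  subst hF hG
  linear_combination hcubic + hcross

/-- Verification of condition (M3) for the FitzHugh-Nagumo model. -/
theorem stmt_16 (a ε κ μ : ℝ) (ha0 : 0 < a) (ha1 : a < 1) (hε : 0 < ε)
    (hκ : 0 < κ) (hμ : 0 < μ)
    (f₁ : ℝ → ℝ) (hf₁ : f₁ = fun u => u * (u - a) * (u - 1))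
    (hμbound : ∀ x, deriv f₁ x ≥ -μ)
    (F G : ℝ → ℝ → ℝ)
    (hF : F = fun u w => f₁ u + w)
    (hG : G = fun u w => -ε * (κ * u - w)) :
    ∀ x y : ℝ × ℝ,
      (F x.1 x.2 - F y.1 y.2) * (x.1 - y.1) + (G x.1 x.2 - G y.1 y.2) * (x.2 - y.2) ≥
        -(μ + (1 + ε * κ) ^ 2 / (2 * ε)) * (x.1 - y.1) ^ 2 +
          (ε / 2) * (x.2 - y.2) ^ 2 :=
  stmt_16_general a ε κ μ hε hκ f₁ hf₁ hμbound F G hF hG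
end

section
/- Let G(u,w) = (1/τ_u)((1-s)(w-1) + s·w) where s = s(u) = (1/2)(1+tanh(κ(u-u_g))) and τ_u = τ_open + (τ_close - τ_open)s, with κ, τ_open, τ_close > 0. If w ∈ [0,1], then |∂G/∂u| ≤ κ·(τ_max + |τ_close - τ_open|)/τ_min², where τ_min = min{τ_open,τ_close}, τ_max = max{τ_open,τ_close}. -/
/-!
Writing `G u w = g (s u)` with `g σ = (w - 1 + σ) / (τopen + (τclose - τopen) σ)`, the chain rule
gives `∂G/∂u = g' (s u) · s' u`. Since `s` takes values in `(0, 1)`, the denominator of `g'` lies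
between `τmin` and `τmax` and `|w - 1 + σ| ≤ 1`, which bounds `|g'|`; and `s' = κ (1 - tanh²) / 2`
lies in `[0, κ]`.
-/

open Real Set

theorem Real.hasDerivAt_tanh (x : ℝ) : HasDerivAt tanh (1 - tanh x ^ 2) x := by
  have h := (hasDerivAt_sinh x).div (hasDerivAt_cosh x) (cosh_pos x).ne'
  have hfun : sinh / cosh = tanh := by
    funext y
    rw [Pi.div_apply, tanh_eq_sinh_div_cosh]
  rw [hfun] at h
  refine h.congr_deriv ?_
  have hc := (cosh_pos x).ne'
  rw [tanh_eq_sinh_div_cosh]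
  field_simp

theorem hasDerivAt_half_one_add_tanh (κ ug u : ℝ) :
    HasDerivAt (fun u => 1 / 2 * (1 + tanh (κ * (u - ug))))
      (κ / 2 * (1 - tanh (κ * (u - ug)) ^ 2)) u := by
  have hlin : HasDerivAt (fun u : ℝ => κ * (u - ug)) κ u := by
    simpa using ((hasDerivAt_id u).sub_const ug).const_mul κ
  exact ((((hasDerivAt_tanh _).comp u hlin).const_add 1).const_mul (1 / 2)).congr_deriv (by ring)

theorem half_one_add_tanh_mem_Ioo (x : ℝ) : 1 / 2 * (1 + tanh x) ∈ Ioo 0 1 := by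
  have := neg_one_lt_tanh x
  have := tanh_lt_one x
  constructor <;> linarith

theorem abs_half_mul_one_sub_tanh_sq_le {κ : ℝ} (hκ : 0 ≤ κ) (x : ℝ) :
    |κ / 2 * (1 - tanh x ^ 2)| ≤ κ := by
  have h0 : 0 ≤ tanh x ^ 2 := sq_nonneg _
  have h1 := tanh_sq_lt_one x
  rw [abs_of_nonneg (by positivity)]
  nlinarith

theorem min_le_add_sub_mul {a b σ : ℝ} (hσ : σ ∈ Icc 0 1) : min a b ≤ a + (b - a) * σ := by
  obtain ⟨h0, h1⟩ := hσ
  rcases le_total a b with hab | hab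
  · rw [min_eq_left hab]; nlinarith
  · rw [min_eq_right hab]; nlinarith

theorem add_sub_mul_le_max {a b σ : ℝ} (hσ : σ ∈ Icc 0 1) : a + (b - a) * σ ≤ max a b := by
  obtain ⟨h0, h1⟩ := hσ
  rcases le_total a b with hab | hab
  · rw [max_eq_right hab]; nlinarith
  · rw [max_eq_left hab]; nlinarith

theorem hasDerivAt_add_div_linear {p a b σ : ℝ} (h : a + b * σ ≠ 0) :
    HasDerivAt (fun σ => (p + σ) / (a + b * σ))
      ((a + b * σ - (p + σ) * b) / (a + b * σ) ^ 2) σ := by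
  have hnum : HasDerivAt (fun σ : ℝ => p + σ) 1 σ := (hasDerivAt_id σ).const_add p
  have hden : HasDerivAt (fun σ : ℝ => a + b * σ) b σ := by
    simpa using ((hasDerivAt_id σ).const_mul b).const_add a
  exact (hnum.fun_div hden h).congr_deriv (by ring)

theorem abs_linear_div_sq_le {τo τc w σ : ℝ} (ho : 0 < τo) (hc : 0 < τc)
    (hw : w ∈ Icc 0 1) (hσ : σ ∈ Icc 0 1) :
    |(τo + (τc - τo) * σ - (w - 1 + σ) * (τc - τo)) / (τo + (τc - τo) * σ) ^ 2|
      ≤ (max τo τc + |τc - τo|) / min τo τc ^ 2 := by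
  have hmin_pos : 0 < min τo τc := lt_min ho hc
  have hlo := min_le_add_sub_mul (a := τo) (b := τc) hσ
  have hhi := add_sub_mul_le_max (a := τo) (b := τc) hσ
  have hw_σ : |w - 1 + σ| ≤ 1 := by
    obtain ⟨hw0, hw1⟩ := hw
    obtain ⟨hσ0, hσ1⟩ := hσ
    rw [abs_le]; constructor <;> linarith
  have hnum : |τo + (τc - τo) * σ - (w - 1 + σ) * (τc - τo)| ≤ max τo τc + |τc - τo| := by
    calc _ ≤ |τo + (τc - τo) * σ| + |(w - 1 + σ) * (τc - τo)| := abs_sub _ _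
      _ ≤ max τo τc + 1 * |τc - τo| := by
          rw [abs_of_pos (hmin_pos.trans_le hlo), abs_mul]
          gcongr
      _ = max τo τc + |τc - τo| := by rw [one_mul]
  rw [abs_div, abs_sq]
  gcongr

/-- Bound on `∂G/∂u` for the regularized Mitchell-Schaeffer model. -/
theorem stmt_19 (κ ug τopen τclose : ℝ) (hκ : 0 < κ)
    (hopen : 0 < τopen) (hclose : 0 < τclose)
    (s τu : ℝ → ℝ)
    (hs : s = fun u => (1 / 2) * (1 + Real.tanh (κ * (u - ug))))
    (hτu : τu = fun u => τopen + (τclose - τopen) * s u)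
    (G : ℝ → ℝ → ℝ)
    (hG : G = fun u w => (1 / τu u) * ((1 - s u) * (w - 1) + s u * w))
    (τmin τmax : ℝ) (hmin : τmin = min τopen τclose) (hmax : τmax = max τopen τclose)
    (w : ℝ) (hw : w ∈ Set.Icc (0 : ℝ) 1) :
    ∀ u, |deriv (fun u => G u w) u| ≤
      κ * (τmax + |τclose - τopen|) / τmin ^ 2 := by
  intro u
  subst hmin hmax
  have hcomp : (fun u => G u w) = (fun σ => (w - 1 + σ) / (τopen + (τclose - τopen) * σ)) ∘ s := by
    funext v
    simp only [hG, hτu, Function.comp]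
    ring
  have hσ : s u ∈ Icc 0 1 := by
    rw [hs]
    exact Ioo_subset_Icc_self (half_one_add_tanh_mem_Ioo _)
  have hs' : HasDerivAt s (κ / 2 * (1 - tanh (κ * (u - ug)) ^ 2)) u := by
    rw [hs]
    exact hasDerivAt_half_one_add_tanh κ ug u
  have hden : τopen + (τclose - τopen) * s u ≠ 0 :=
    ((lt_min hopen hclose).trans_le (min_le_add_sub_mul hσ)).ne'
  have hderiv := (hasDerivAt_add_div_linear (p := w - 1) hden).comp u hs'
  rw [hcomp, hderiv.deriv, abs_mul]
  calc _ ≤ (max τopen τclose + |τclose - τopen|) / min τopen τclose ^ 2 * κ :=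
        mul_le_mul (abs_linear_div_sq_le hopen hclose hw hσ)
          (abs_half_mul_one_sub_tanh_sq_le hκ.le _) (abs_nonneg _) (by positivity)
    _ = _ := by ring
end
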